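/- The ratio of the prime-counting function to the complement of the gap sum tends to zero: lim_{x→∞} π(x) / (x − Σ_{k=1}^{x} (p_{p'_k} − p_{p'_k − 1})) = 0, where the limit is taken as the natural number x tends to infinity. -/

import Mathlib

/-!
Beyond `k = 1`, the sieve indices are at least `2`, so each gap term is the difference of two
consecutive odd primes and hence at least `2`. The gap sum up to `x` therefore exceeds
`2 (x - 1)`, so the denominator has absolute value at least `x - 2`, while `π(x) = o(x)` by
Chebyshev's bound `π(x) = O(x / log x)`.
-/

/-- `nthPrime n` is the n-th prime with `nthPrime 1 = 2`. -/
noncomputable def nthPrime (n : ℕ) : ℕ := Nat.nth Nat.Prime (n - 1)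

/-- 0-indexed index sequence of the sieve: `sieveIdx 0 = k_1 = 1`, and
`sieveIdx n = k_{n+1}` is the least natural number greater than `k_n` that does
not occur among the previously produced values `p'_1, ..., p'_n`. -/
noncomputable def sieveIdx : ℕ → ℕ
  | 0 => 1
  | n + 1 => sInf {m : ℕ | sieveIdx n < m ∧ ∀ i ≤ n, nthPrime (sieveIdx i) ≠ m}

/-- `pP n = p'_n` (for `n ≥ 1`), the n-th term of the sieve sequence P'. -/
noncomputable def pP (n : ℕ) : ℕ := nthPrime (sieveIdx (n - 1))

/-- The k-th gap term `p_{p'_k} - p_{p'_k - 1}`. -/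
noncomputable def gapTerm (k : ℕ) : ℕ := nthPrime (pP k) - nthPrime (pP k - 1)

open Filter Asymptotics Real

theorem isLittleO_div_log_self : (fun x : ℝ => x / log x) =o[atTop] (fun x => x) := by
  have h : (fun x : ℝ => (log x)⁻¹) =o[atTop] (fun _ => (1 : ℝ)) :=
    (isLittleO_one_iff ℝ).mpr (tendsto_inv_atTop_zero.comp tendsto_log_atTop)
  simpa [div_eq_mul_inv] using (isBigO_refl (fun x : ℝ => x) atTop).mul_isLittleO h

theorem isBigO_primeCounting_floor :
    (fun x : ℝ => (Nat.primeCounting ⌊x⌋₊ : ℝ)) =O[atTop] (fun x => x / log x) := by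
  refine IsBigO.of_bound (log 4 + 1) ?_
  filter_upwards [Chebyshev.eventually_primeCounting_le one_pos, eventually_gt_atTop 1]
    with x hπ hx
  rw [norm_of_nonneg (by positivity), norm_of_nonneg (div_nonneg (by linarith) (log_nonneg hx.le)),
    ← mul_div_assoc]
  exact hπ

theorem isLittleO_primeCounting :
    (fun n : ℕ => (Nat.primeCounting n : ℝ)) =o[atTop] (fun n => (n : ℝ)) := by
  simpa [Function.comp_def] using (isBigO_primeCounting_floor.trans_isLittleO
    isLittleO_div_log_self).comp_tendsto tendsto_natCast_atTop_atTop

theorem two_le_nth_prime_succ_sub {n : ℕ} (hn : 1 ≤ n) :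
    2 ≤ Nat.nth Nat.Prime (n + 1) - Nat.nth Nat.Prime n := by
  have hmono := Nat.nth_strictMono Nat.infinite_setOfPred_prime
  have hodd : ∀ j, 1 ≤ j → Odd (Nat.nth Nat.Prime j) := fun j hj =>
    (Nat.prime_nth_prime j).odd_of_ne_two
      (Nat.nth_prime_zero_eq_two ▸ (hmono (by omega : 0 < j)).ne')
  obtain ⟨a, ha⟩ := hodd n hn
  obtain ⟨b, hb⟩ := hodd (n + 1) (by omega)
  have hlt : Nat.nth Nat.Prime n < Nat.nth Nat.Prime (n + 1) := hmono (lt_add_one n)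
  omega

theorem sieveIdx_succ_lt (n : ℕ) : sieveIdx n < sieveIdx (n + 1) := by
  let S := Finset.range (n + 1) |>.sup fun i => nthPrime (sieveIdx i)
  have hne : {m : ℕ | sieveIdx n < m ∧ ∀ i ≤ n, nthPrime (sieveIdx i) ≠ m}.Nonempty :=
    ⟨S + sieveIdx n + 1, by omega, fun i hi => by
      have : nthPrime (sieveIdx i) ≤ S := Finset.le_sup (f := fun i => nthPrime (sieveIdx i))
        (Finset.mem_range_succ_iff.mpr hi)
      omega⟩
  rw [sieveIdx.eq_2]
  exact (Nat.sInf_mem hne).1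

theorem strictMono_sieveIdx : StrictMono sieveIdx :=
  strictMono_nat_of_lt_succ sieveIdx_succ_lt

theorem two_le_gapTerm {k : ℕ} (hk : 2 ≤ k) : 2 ≤ gapTerm k := by
  have hidx : 1 < sieveIdx (k - 1) := by
    simpa only [sieveIdx.eq_1] using strictMono_sieveIdx (show 0 < k - 1 by omega)
  have hpP : 2 < pP k := Nat.nth_prime_zero_eq_two ▸
    Nat.nth_strictMono Nat.infinite_setOfPred_prime (by omega : 0 < sieveIdx (k - 1) - 1)
  obtain ⟨j, hj⟩ : ∃ j, pP k = j + 2 := ⟨pP k - 2, by omega⟩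
  unfold gapTerm nthPrime
  rw [hj]
  exact two_le_nth_prime_succ_sub (by omega)

theorem two_mul_sub_one_le_sum_gapTerm (x : ℕ) :
    2 * (x - 1) ≤ ∑ k ∈ Finset.Icc 1 x, gapTerm k :=
  calc 2 * (x - 1) = ∑ _k ∈ Finset.Icc 2 x, 2 := by
        rw [Finset.sum_const, Nat.card_Icc, smul_eq_mul]; omega
    _ ≤ ∑ k ∈ Finset.Icc 2 x, gapTerm k :=
      Finset.sum_le_sum fun k hk => two_le_gapTerm (Finset.mem_Icc.mp hk).1
    _ ≤ ∑ k ∈ Finset.Icc 1 x, gapTerm k :=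
      Finset.sum_le_sum_of_subset (Finset.Icc_subset_Icc_left one_le_two)

open Filter in
/-- The ratio of π(x) to the complement of the gap sum tends to zero:
`lim_{x→∞} π(x) / (x − Σ_{k=1}^{x} (p_{p'_k} − p_{p'_k − 1})) = 0`. -/
theorem stmt2 :
    Tendsto (fun x : ℕ =>
        (Nat.primeCounting x : ℝ) /
          ((x : ℝ) - ((∑ k ∈ Finset.Icc 1 x, gapTerm k : ℕ) : ℝ)))
      atTop (nhds 0) := by
  refine (isLittleO_primeCounting.trans_isBigO (IsBigO.of_bound 2 ?_)).tendsto_div_nhds_zero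
  filter_upwards [eventually_ge_atTop 4] with x hx
  have hsum := two_mul_sub_one_le_sum_gapTerm x
  generalize ∑ k ∈ Finset.Icc 1 x, gapTerm k = S at hsum ⊢
  have hS : (3 * x : ℝ) ≤ 2 * S := by exact_mod_cast (by omega : 3 * x ≤ 2 * S)
  rw [norm_natCast, Real.norm_eq_abs, abs_of_nonpos (by linarith)]
  linarith
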